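/- arXiv:2003.03254 — 2 statements merged into one kernel-verified Lean document; each statement's English description precedes it below -/
import Mathlib

section
/- Let r be an even integer ≥ 4. The group with presentation ⟨s₁, s₂, s₃ | sᵢ² = 1 (1 ≤ i ≤ 3), (s₂s₃)^r = 1, (s₁s₂)² = (s₁s₃)² = (s₂s₃)^(r/2)⟩ has order 4r and is isomorphic to a semidirect product D_r ⋊ C₂, where D_r is the dihedral group of order 2r. -/
def stmt5Rels (r : ℕ) : Set (FreeGroup (Fin 3)) :=
  let s : Fin 3 → FreeGroup (Fin 3) := FreeGroup.of
  { s 0 ^ 2, s 1 ^ 2, s 2 ^ 2, (s 1 * s 2) ^ r,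
    (s 0 * s 1) ^ 2 * ((s 1 * s 2) ^ (r / 2))⁻¹,
    (s 0 * s 2) ^ 2 * ((s 1 * s 2) ^ (r / 2))⁻¹ }

/-!
Write `ρ = s₂s₃` and `z = ρ ^ (r/2)`. The involution `s₂` inverts `ρ`, hence `z`, and `z² = 1`,
so `z` commutes with `s₂` and `s₃`. The last two relations say `s₁s₂s₁ = z s₂` and
`s₁s₃s₁ = z s₃`; therefore `s₁` centralises `ρ` and multiplies every reflection `s₂ρⁱ` by `z`.
On `D_r = ⟨s₂, s₃⟩` this is the automorphism `sr i ↦ sr (i + r/2)` fixing the rotations, and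
`s₁ ↦ (generator of C₂)`, `s₂ ↦ sr 0`, `s₃ ↦ sr 1` is an isomorphism onto `D_r ⋊ C₂`, whose
inverse comes from the universal properties of `D_r` and of the semidirect product.
-/

open Multiplicative

namespace ZMod

variable {G : Type*} [Group G] {n : ℕ}

def powHom (g : G) (hg : g ^ n = 1) : Multiplicative (ZMod n) →* G :=
  AddMonoidHom.toMultiplicativeLeft <| ZMod.lift n
    ⟨zmultiplesHom (Additive G) (Additive.ofMul g), by simpa using congrArg Additive.ofMul hg⟩

@[simp] lemma powHom_intCast (g : G) (hg : g ^ n = 1) (k : ℤ) :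
    powHom g hg (ofAdd (k : ZMod n)) = g ^ k := by
  simp [powHom]

@[simp] lemma powHom_natCast (g : G) (hg : g ^ n = 1) (k : ℕ) :
    powHom g hg (ofAdd (k : ZMod n)) = g ^ k := by
  simpa using powHom_intCast g hg k

@[simp] lemma powHom_ofAdd_one (g : G) (hg : g ^ n = 1) : powHom g hg (ofAdd 1) = g := by
  simpa using powHom_natCast g hg 1

lemma mul_powHom_mul_eq_inv {a b : G} (ha : a ^ n = 1) (hb : b * b = 1)
    (hab : b * a * b = a⁻¹) (i : ZMod n) :
    b * powHom a ha (ofAdd i) * b = (powHom a ha (ofAdd i))⁻¹ := by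
  obtain ⟨k, rfl⟩ := intCast_surjective i
  have hb' : b⁻¹ = b := inv_eq_of_mul_eq_one_right hb
  rw [powHom_intCast]
  calc b * a ^ k * b = b * a ^ k * b⁻¹ := by rw [hb']
    _ = (b * a * b⁻¹) ^ k := conj_zpow.symm
    _ = (a ^ k)⁻¹ := by rw [hb', hab, inv_zpow]

lemma natCast_half_add_natCast_half (hn : Even n) :
    ((n / 2 : ℕ) : ZMod n) + ((n / 2 : ℕ) : ZMod n) = 0 := by
  obtain ⟨k, rfl⟩ := hn
  rw [← Nat.cast_add, show (k + k) / 2 + (k + k) / 2 = k + k by omega, natCast_self]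

end ZMod

theorem MonoidHom.ext_mzmod {G : Type*} [Group G] {n : ℕ} {f g : Multiplicative (ZMod n) →* G}
    (h : f (ofAdd 1) = g (ofAdd 1)) : f = g := by
  refine MonoidHom.ext fun x => ?_
  obtain ⟨k, hk⟩ := ZMod.intCast_surjective (toAdd x)
  rw [show x = ofAdd 1 ^ k by rw [← ofAdd_zsmul, zsmul_one, hk, ofAdd_toAdd], map_zpow, map_zpow,
    h]

namespace DihedralGroup

variable {G : Type*} [Group G] {n : ℕ}

def lift (a b : G) (ha : a ^ n = 1) (hb : b * b = 1) (hab : b * a * b = a⁻¹) :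
    DihedralGroup n →* G where
  toFun
    | r i => ZMod.powHom a ha (ofAdd i)
    | sr i => b * ZMod.powHom a ha (ofAdd i)
  map_one' := by rw [one_def]; exact map_one _
  map_mul' := by
    have hcomm (i j : ZMod n) :
        Commute (ZMod.powHom a ha (ofAdd i)) (ZMod.powHom a ha (ofAdd j)) :=
      (Commute.all (ofAdd i) (ofAdd j)).map _
    rintro (i | i) (j | j) <;>
      simp only [r_mul_r, r_mul_sr, sr_mul_r, sr_mul_sr, ofAdd_add, ofAdd_sub, map_mul, map_div]
    · rw [div_eq_mul_inv, ← (hcomm i j).inv_left.eq, ← ZMod.mul_powHom_mul_eq_inv ha hb hab i]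
      simp only [← mul_assoc, hb, one_mul]
    · rw [mul_assoc]
    · rw [← mul_assoc, ZMod.mul_powHom_mul_eq_inv ha hb hab i, div_eq_mul_inv,
        (hcomm i j).inv_left.eq]

section Lift

variable {a b : G} (ha : a ^ n = 1) (hb : b * b = 1) (hab : b * a * b = a⁻¹) (i : ZMod n)

@[simp] lemma lift_r : lift a b ha hb hab (r i) = ZMod.powHom a ha (ofAdd i) := rfl

@[simp] lemma lift_sr : lift a b ha hb hab (sr i) = b * ZMod.powHom a ha (ofAdd i) := rfl

end Lift

theorem hom_ext {f g : DihedralGroup n →* G} (h₁ : f (r 1) = g (r 1))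
    (h₂ : f (sr 0) = g (sr 0)) : f = g := by
  have hr (i : ZMod n) : f (r i) = g (r i) := by
    obtain ⟨k, rfl⟩ := ZMod.intCast_surjective i
    rw [← r_one_zpow, map_zpow, map_zpow, h₁]
  refine MonoidHom.ext fun
    | r i => hr i
    | sr i => by rw [← zero_add i, ← sr_mul_r, map_mul, map_mul, h₂, hr]

def shiftAut (c : ZMod n) : MulAut (DihedralGroup n) where
  toFun
    | r i => r i
    | sr i => sr (i + c)
  invFun
    | r i => r i
    | sr i => sr (i - c)
  left_inv := by rintro (i | i) <;> simp
  right_inv := by rintro (i | i) <;> simp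
  map_mul' := by
    rintro (i | i) (j | j) <;> simp only [r_mul_r, r_mul_sr, sr_mul_r, sr_mul_sr] <;> congr 1 <;>
      ring

@[simp] lemma shiftAut_r (c i : ZMod n) : shiftAut c (r i) = r i := rfl

@[simp] lemma shiftAut_sr (c i : ZMod n) : shiftAut c (sr i) = sr (i + c) := rfl

lemma shiftAut_sq {c : ZMod n} (hc : c + c = 0) : shiftAut c ^ 2 = 1 := by
  ext (i | i) <;> simp [sq, add_assoc, hc]

end DihedralGroup

namespace Stmt5

open DihedralGroup SemidirectProduct

variable {n : ℕ}

-- `gen n 0`, `gen n 1`, `gen n 2` are `s₁`, `s₂`, `s₃`, and `rot n` is `ρ`.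
abbrev gen (n : ℕ) (i : Fin 3) : PresentedGroup (stmt5Rels n) := PresentedGroup.of i

abbrev rot (n : ℕ) : PresentedGroup (stmt5Rels n) := gen n 1 * gen n 2

lemma gen_mul_self (i : Fin 3) : gen n i * gen n i = 1 := by
  have h := PresentedGroup.one_of_mem (rels := stmt5Rels n) (x := FreeGroup.of i ^ 2)
    (by fin_cases i <;> simp [stmt5Rels])
  rwa [map_pow, sq] at h

@[simp] lemma gen_inv (i : Fin 3) : (gen n i)⁻¹ = gen n i :=
  inv_eq_of_mul_eq_one_right (gen_mul_self i)

lemma gen_mul_gen_mul (i : Fin 3) (x : PresentedGroup (stmt5Rels n)) :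
    gen n i * (gen n i * x) = x := by
  rw [← mul_assoc, gen_mul_self, one_mul]

lemma rot_pow : rot n ^ n = 1 := by
  have h := PresentedGroup.one_of_mem (rels := stmt5Rels n)
    (x := (FreeGroup.of 1 * FreeGroup.of 2) ^ n) (by simp [stmt5Rels])
  rwa [map_pow, map_mul] at h

lemma gen_zero_mul_gen_mul_gen_zero {i : Fin 3} (hi : i ≠ 0) :
    gen n 0 * gen n i * gen n 0 = rot n ^ (n / 2) * gen n i := by
  have h := PresentedGroup.one_of_mem (rels := stmt5Rels n)
    (x := (FreeGroup.of 0 * FreeGroup.of i) ^ 2 * ((FreeGroup.of 1 * FreeGroup.of 2) ^ (n / 2))⁻¹)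
    (by fin_cases i <;> simp_all [stmt5Rels])
  replace h : (gen n 0 * gen n i) ^ 2 = rot n ^ (n / 2) := by
    simp only [map_mul, map_pow, map_inv, mul_inv_eq_one] at h
    exact h
  rw [← h, sq]
  simp only [mul_assoc, gen_mul_self, mul_one]

lemma gen_one_mul_rot_pow_mul_gen_one (k : ℕ) :
    gen n 1 * rot n ^ k * gen n 1 = (rot n ^ k)⁻¹ :=
  calc gen n 1 * rot n ^ k * gen n 1 = gen n 1 * rot n ^ k * (gen n 1)⁻¹ := by rw [gen_inv]
    _ = (gen n 1 * rot n * (gen n 1)⁻¹) ^ k := conj_pow.symm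
    _ = (rot n ^ k)⁻¹ := by
      rw [gen_inv, ← inv_pow, mul_inv_rev, gen_inv, gen_inv]
      simp only [rot, gen_mul_gen_mul]

lemma gen_zero_mul_rot_mul_gen_zero : gen n 0 * rot n * gen n 0 = rot n :=
  calc gen n 0 * rot n * gen n 0
      = (gen n 0 * gen n 1 * gen n 0) * (gen n 0 * gen n 2 * gen n 0) := by
        simp only [mul_assoc, gen_mul_gen_mul]
    _ = rot n ^ (n / 2) * gen n 1 * (rot n ^ (n / 2) * gen n 2) := by
        rw [gen_zero_mul_gen_mul_gen_zero (by decide), gen_zero_mul_gen_mul_gen_zero (by decide)]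
    _ = rot n ^ (n / 2) * (gen n 1 * rot n ^ (n / 2) * gen n 1) * rot n := by
        simp only [mul_assoc, gen_mul_gen_mul]
    _ = rot n := by rw [gen_one_mul_rot_pow_mul_gen_one, mul_inv_cancel, one_mul]

lemma rot_pow_half_inv (hn : Even n) : (rot n ^ (n / 2))⁻¹ = rot n ^ (n / 2) := by
  refine inv_eq_of_mul_eq_one_right ?_
  obtain ⟨k, rfl⟩ := hn
  rw [← pow_add, show (k + k) / 2 + (k + k) / 2 = k + k by omega, rot_pow]

lemma gen_one_mul_rot_pow_half (hn : Even n) :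
    gen n 1 * rot n ^ (n / 2) = rot n ^ (n / 2) * gen n 1 := by
  conv_rhs => rw [← rot_pow_half_inv hn, ← gen_one_mul_rot_pow_mul_gen_one]
  rw [mul_assoc, gen_mul_self, mul_one]

def action (hn : Even n) : Multiplicative (ZMod 2) →* MulAut (DihedralGroup n) :=
  ZMod.powHom (shiftAut ((n / 2 : ℕ) : ZMod n))
    (shiftAut_sq (ZMod.natCast_half_add_natCast_half hn))

@[simp] lemma action_ofAdd_one (hn : Even n) :
    action hn (ofAdd 1) = shiftAut ((n / 2 : ℕ) : ZMod n) :=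
  ZMod.powHom_ofAdd_one _ _

lemma inr_mul_inl_sr_sq (hn : Even n) (i : ZMod n) :
    (inr (ofAdd 1) * inl (sr i) : DihedralGroup n ⋊[action hn] Multiplicative (ZMod 2)) ^ 2 =
      inl (r (n / 2 : ℕ)) := by
  rw [sq]
  ext
  · simp [SemidirectProduct.mul_left, SemidirectProduct.mul_right]
  · simp only [SemidirectProduct.mul_right, right_inr, right_inl, mul_one]
    decide

lemma inl_sr_zero_mul_inl_sr_one {H : Type*} [Group H] {φ : H →* MulAut (DihedralGroup n)} :
    (inl (sr 0) * inl (sr 1) : DihedralGroup n ⋊[φ] H) = inl (r 1) := by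
  rw [← map_mul, sr_mul_sr, sub_zero]

def toSemidirect (hn : Even n) :
    PresentedGroup (stmt5Rels n) →* DihedralGroup n ⋊[action hn] Multiplicative (ZMod 2) :=
  PresentedGroup.toGroup (f := ![inr (ofAdd 1), inl (sr 0), inl (sr 1)]) <| by
    intro w hw
    simp only [stmt5Rels, Set.mem_insert_iff, Set.mem_singleton_iff] at hw
    rcases hw with rfl | rfl | rfl | rfl | rfl | rfl <;>
      simp only [map_mul, map_pow, map_inv, FreeGroup.lift_apply_of, Matrix.cons_val]
    · rw [← map_pow, show (ofAdd 1 : Multiplicative (ZMod 2)) ^ 2 = 1 by decide, map_one]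
    · rw [← map_pow, sq, sr_mul_self, map_one]
    · rw [← map_pow, sq, sr_mul_self, map_one]
    · rw [inl_sr_zero_mul_inl_sr_one, ← map_pow, r_one_pow_n, map_one]
    · rw [inr_mul_inl_sr_sq, inl_sr_zero_mul_inl_sr_one, ← map_pow, r_one_pow, mul_inv_cancel]
    · rw [inr_mul_inl_sr_sq, inl_sr_zero_mul_inl_sr_one, ← map_pow, r_one_pow, mul_inv_cancel]

def ofDihedral (n : ℕ) : DihedralGroup n →* PresentedGroup (stmt5Rels n) :=
  DihedralGroup.lift (rot n) (gen n 1) rot_pow (gen_mul_self 1)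
    (by simpa using gen_one_mul_rot_pow_mul_gen_one (n := n) 1)

def ofC2 (n : ℕ) : Multiplicative (ZMod 2) →* PresentedGroup (stmt5Rels n) :=
  ZMod.powHom (gen n 0) (by rw [sq, gen_mul_self])

lemma ofDihedral_comp_action (hn : Even n) (g : Multiplicative (ZMod 2)) :
    (ofDihedral n).comp (action hn g).toMonoidHom =
      (MulAut.conj (ofC2 n g)).toMonoidHom.comp (ofDihedral n) := by
  obtain rfl | rfl : g = 1 ∨ g = ofAdd 1 := by revert g; decide
  · ext; simp
  · refine DihedralGroup.hom_ext ?_ ?_ <;> simp only [ofDihedral, ofC2, MonoidHom.comp_apply,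
      MulEquiv.coe_toMonoidHom, action_ofAdd_one, ZMod.powHom_ofAdd_one, MulAut.conj_apply, gen_inv]
    · rw [shiftAut_r, lift_r, ZMod.powHom_ofAdd_one, gen_zero_mul_rot_mul_gen_zero]
    · rw [shiftAut_sr, zero_add, lift_sr, lift_sr, ZMod.powHom_natCast, ofAdd_zero, map_one,
        mul_one, gen_zero_mul_gen_mul_gen_zero (by decide), gen_one_mul_rot_pow_half hn]

def ofSemidirect (hn : Even n) :
    DihedralGroup n ⋊[action hn] Multiplicative (ZMod 2) →* PresentedGroup (stmt5Rels n) :=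
  SemidirectProduct.lift (ofDihedral n) (ofC2 n) (ofDihedral_comp_action hn)

@[simp] lemma toSemidirect_gen (hn : Even n) (i : Fin 3) :
    toSemidirect hn (gen n i) = ![inr (ofAdd 1), inl (sr 0), inl (sr 1)] i :=
  PresentedGroup.toGroup.of _

def mulEquiv (hn : Even n) :
    PresentedGroup (stmt5Rels n) ≃* DihedralGroup n ⋊[action hn] Multiplicative (ZMod 2) :=
  MonoidHom.toMulEquiv (toSemidirect hn) (ofSemidirect hn)
    (PresentedGroup.ext fun i => by
      fin_cases i <;> simp [ofSemidirect, ofDihedral, ofC2, gen_mul_gen_mul])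
    (SemidirectProduct.hom_ext
      (DihedralGroup.hom_ext (by simp [ofSemidirect, ofDihedral, inl_sr_zero_mul_inl_sr_one])
        (by simp [ofSemidirect, ofDihedral]))
      (MonoidHom.ext_mzmod (by simp [ofSemidirect, ofC2])))

end Stmt5

theorem stmt_5_general (r : ℕ) (hre : Even r) :
    Nat.card (PresentedGroup (stmt5Rels r)) = 4 * r ∧
    ∃ φ : Multiplicative (ZMod 2) →* MulAut (DihedralGroup r),
      Nonempty (PresentedGroup (stmt5Rels r) ≃*
        SemidirectProduct (DihedralGroup r) (Multiplicative (ZMod 2)) φ) := by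
  refine ⟨?_, _, ⟨Stmt5.mulEquiv hre⟩⟩
  rw [Nat.card_congr (Stmt5.mulEquiv hre).toEquiv, SemidirectProduct.card, DihedralGroup.nat_card,
    Nat.card_eq_fintype_card (α := Multiplicative (ZMod 2)), Fintype.card_multiplicative, ZMod.card]
  ring

theorem stmt_5 (r : ℕ) (hr : 4 ≤ r) (hre : Even r) :
    Nat.card (PresentedGroup (stmt5Rels r)) = 4 * r ∧
    ∃ φ : Multiplicative (ZMod 2) →* MulAut (DihedralGroup r),
      Nonempty (PresentedGroup (stmt5Rels r) ≃*
        SemidirectProduct (DihedralGroup r) (Multiplicative (ZMod 2)) φ) :=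
  stmt_5_general r hre
end

section
/- With s₂, s₃ acting on ℂ² as the matrices [[-1,l],[0,1]] and [[1,0],[m,-1]] with lm = γ, l + m = -γ, l ≠ m, the vectors v₁ = l·a₂ - m·a₃ and v₂ = a₂ - a₃ are eigenvectors of s₂s₃ with eigenvalues -(l+1) and -(m+1) respectively, and both s₂ and s₃ exchange the lines ⟨v₁⟩ and ⟨v₂⟩. -/
theorem stmt_8 (γ l m : ℂ) (hprod : l * m = γ) (hsum : l + m = -γ) (hlm : l ≠ m)
    (s₂ s₃ : Matrix (Fin 2) (Fin 2) ℂ)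
    (hs₂ : s₂ = !![-1, l; 0, 1]) (hs₃ : s₃ = !![1, 0; m, -1])
    (v₁ v₂ : Fin 2 → ℂ) (hv₁ : v₁ = ![l, -m]) (hv₂ : v₂ = ![1, -1]) :
    (s₂ * s₃).mulVec v₁ = (-(l + 1)) • v₁ ∧
    (s₂ * s₃).mulVec v₂ = (-(m + 1)) • v₂ ∧
    s₂.mulVec v₁ ∈ Submodule.span ℂ {v₂} ∧
    s₂.mulVec v₂ ∈ Submodule.span ℂ {v₁} ∧
    s₃.mulVec v₁ ∈ Submodule.span ℂ {v₂} ∧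
    s₃.mulVec v₂ ∈ Submodule.span ℂ {v₁} := by
  subst hs₂ hs₃ hv₁ hv₂
  have hγ : l * m = -(l + m) := by linear_combination hprod + hsum
  have hl0 : l ≠ 0 := fun h => hlm (by linear_combination -hγ + (m + 2) * h)
  have hm0 : m ≠ 0 := fun h => hlm (by linear_combination hγ - (l + 2) * h)
  refine ⟨?_, ?_, ?_, ?_, ?_, ?_⟩
  · funext i
    fin_cases i <;>
      simp [Matrix.mulVec, dotProduct, Fin.sum_univ_two] <;>
      first
        | ring1
        | linear_combination hγ
        | linear_combination -hγ
        | linear_combination l * hγ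
        | linear_combination m * hγ
        | linear_combination -(l * hγ)
        | linear_combination -(m * hγ)
  · funext i
    fin_cases i <;>
      simp [Matrix.mulVec, dotProduct, Fin.sum_univ_two] <;>
      first
        | ring1
        | linear_combination hγ
        | linear_combination -hγ
  · rw [Submodule.mem_span_singleton]
    refine ⟨m, ?_⟩
    funext i
    fin_cases i <;>
      simp [Matrix.mulVec, dotProduct, Fin.sum_univ_two] <;>
      first
        | ring1
        | linear_combination hγ
        | linear_combination -hγ
  · rw [Submodule.mem_span_singleton]
    refine ⟨m⁻¹, ?_⟩
    funext i
    fin_cases i <;>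
      simp [Matrix.mulVec, dotProduct, Fin.sum_univ_two] <;>
      field_simp <;>
      first
        | ring1
        | linear_combination hγ
        | linear_combination -hγ
        | linear_combination m * hγ
        | linear_combination -(m * hγ)
  · rw [Submodule.mem_span_singleton]
    refine ⟨l, ?_⟩
    funext i
    fin_cases i <;>
      simp [Matrix.mulVec, dotProduct, Fin.sum_univ_two] <;>
      first
        | ring1
        | linear_combination hγ
        | linear_combination -hγ
  · rw [Submodule.mem_span_singleton]
    refine ⟨l⁻¹, ?_⟩
    funext i
    fin_cases i <;>
      simp [Matrix.mulVec, dotProduct, Fin.sum_univ_two] <;>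
      field_simp <;>
      first
        | ring1
        | linear_combination hγ
        | linear_combination -hγ
        | linear_combination l * hγ
        | linear_combination -(l * hγ)
end
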